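/- arXiv:2104.05129 — 4 statements merged into one kernel-verified Lean document; each statement's English description precedes it below -/
import Mathlib

section
/- If z ∈ 𝔉 is nonzero, then the Hurwitz continued fraction digit a₁(z) = [1/z] satisfies |a₁(z)| ≥ √2. In particular a₁(z) ∉ {0, 1, -1, i, -i}. -/
set_option maxHeartbeats 1000000

/-- The nearest Gaussian integer to a complex number. -/
noncomputable def hFloor (z : ℂ) : ℂ :=
  (⌊z.re + 1/2⌋ : ℤ) + (⌊z.im + 1/2⌋ : ℤ) * Complex.I


lemma auxcase (X Y d : ℝ) (hd : 0 < d) (hsum : X^2 + Y^2 = d)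
    (hX : X^2 ≤ 1/4) (h1 : d/2 ≤ X) (h2 : X ≤ 3*d/2) (h3 : Y^2 ≤ d^2/4) : False := by
  have hX0 : 0 < X := lt_of_lt_of_le (by linarith) h1
  have hXsq : X^2 ≤ 9*d^2/4 := by nlinarith
  have hg1 : d - d^2/4 ≤ X^2 := by nlinarith
  have h25 : 2/5 ≤ d := by nlinarith
  have hd1 : d ≤ 1 := by nlinarith
  nlinarith [mul_nonneg (by linarith : (0:ℝ) ≤ d - 2/5) (by linarith : (0:ℝ) ≤ 1 - d)]

/-- If `z ∈ 𝔉 = {w : [w] = 0}` is nonzero, then the first Hurwitz digit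
`a₁(z) = [1/z]` has absolute value at least `√2`; in particular it is not
`0, 1, -1, i, -i`. -/
theorem stmt_1 (z : ℂ) (hz : hFloor z = 0) (hz0 : z ≠ 0) :
    Real.sqrt 2 ≤ ‖hFloor z⁻¹‖ ∧
      hFloor z⁻¹ ∉ ({0, 1, -1, Complex.I, -Complex.I} : Set ℂ) := by
  set x := z.re with hxdef
  set y := z.im with hydef
  have h1 := congrArg Complex.re hz
  have h2 := congrArg Complex.im hz
  simp [hFloor] at h1 h2
  have hx1 : -(1/2 : ℝ) ≤ x := by have := h1.1; linarith
  have hx2 : x < 1/2 := by have := h1.2; linarith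
  have hy1 : -(1/2 : ℝ) ≤ y := by have := h2.1; linarith
  have hy2 : y < 1/2 := by have := h2.2; linarith
  set d : ℝ := x^2 + y^2 with hddef
  have hd : 0 < d := by
    have h := Complex.normSq_pos.mpr hz0
    have hns : Complex.normSq z = d := by rw [Complex.normSq_apply]; ring
    linarith [hns ▸ h]
  have hwre : (z⁻¹).re = x / d := by
    rw [Complex.inv_re, Complex.normSq_apply]; ring_nf; simp only [hddef, hxdef, hydef]
  have hwim : (z⁻¹).im = -y / d := by
    rw [Complex.inv_im, Complex.normSq_apply]; ring_nf; simp only [hddef, hxdef, hydef]; ring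
  set a : ℤ := ⌊(z⁻¹).re + 1/2⌋ with hadef
  set b : ℤ := ⌊(z⁻¹).im + 1/2⌋ with hbdef
  have hfa1 : (a : ℝ) ≤ x / d + 1/2 := by
    have := Int.floor_le ((z⁻¹).re + 1/2)
    rw [← hadef, hwre] at this; exact this
  have hfa2 : x / d + 1/2 < (a : ℝ) + 1 := by
    have := Int.lt_floor_add_one ((z⁻¹).re + 1/2)
    rw [← hadef, hwre] at this; exact this
  have hfb1 : (b : ℝ) ≤ -y / d + 1/2 := by
    have := Int.floor_le ((z⁻¹).im + 1/2)
    rw [← hbdef, hwim] at this; exact this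
  have hfb2 : -y / d + 1/2 < (b : ℝ) + 1 := by
    have := Int.lt_floor_add_one ((z⁻¹).im + 1/2)
    rw [← hbdef, hwim] at this; exact this
  have ha1 : ((a : ℝ) - 1/2) * d ≤ x := by
    have h : (a : ℝ) - 1/2 ≤ x / d := by linarith
    calc ((a:ℝ) - 1/2) * d ≤ (x/d) * d := by nlinarith
    _ = x := by field_simp
  have ha2 : x < ((a : ℝ) + 1/2) * d := by
    have h : x / d < (a : ℝ) + 1/2 := by linarith
    calc x = (x/d) * d := by field_simp
    _ < ((a:ℝ)+1/2) * d := by nlinarith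
  have hb1 : ((b : ℝ) - 1/2) * d ≤ -y := by
    have h : (b : ℝ) - 1/2 ≤ -y / d := by linarith
    calc ((b:ℝ) - 1/2) * d ≤ (-y/d) * d := by nlinarith
    _ = -y := by field_simp
  have hb2 : -y < ((b : ℝ) + 1/2) * d := by
    have h : -y / d < (b : ℝ) + 1/2 := by linarith
    calc -y = (-y/d) * d := by field_simp
    _ < ((b:ℝ)+1/2) * d := by nlinarith
  have key : (2 : ℤ) ≤ a^2 + b^2 := by
    by_contra hcon
    push_neg at hcon
    have hxq : x^2 ≤ 1/4 := by nlinarith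
    have hyq : y^2 ≤ 1/4 := by nlinarith
    have hal : -1 ≤ a := by nlinarith [sq_nonneg b, sq_nonneg (a+1)]
    have har : a ≤ 1 := by nlinarith [sq_nonneg b, sq_nonneg (a-1)]
    have hbl : -1 ≤ b := by nlinarith [sq_nonneg a, sq_nonneg (b+1)]
    have hbr : b ≤ 1 := by nlinarith [sq_nonneg a, sq_nonneg (b-1)]
    interval_cases a <;> interval_cases b <;> push_cast at ha1 ha2 hb1 hb2
    · norm_num at hcon
    · exact auxcase (-x) y d hd (by rw [hddef]; try ring) (by nlinarith)
        (by linarith) (by linarith) (by nlinarith)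
    · norm_num at hcon
    · exact auxcase y x d hd (by rw [hddef]; try ring) (by nlinarith)
        (by linarith) (by linarith) (by nlinarith)
    · nlinarith
    · exact auxcase (-y) x d hd (by rw [hddef]; try ring) (by nlinarith)
        (by linarith) (by linarith) (by nlinarith)
    · norm_num at hcon
    · exact auxcase x y d hd (by rw [hddef]; try ring) (by nlinarith)
        (by linarith) (by linarith) (by nlinarith)
    · norm_num at hcon
  have hflo : hFloor z⁻¹ = ((a:ℝ) : ℂ) + ((b:ℝ):ℂ) * Complex.I := by
    rw [hFloor, ← hadef, ← hbdef]; push_cast; ring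
  have habs : ‖hFloor z⁻¹‖ = Real.sqrt ((a:ℝ)^2 + (b:ℝ)^2) := by
    rw [hflo, Complex.norm_def, Complex.normSq_add_mul_I]
  have hge : Real.sqrt 2 ≤ ‖hFloor z⁻¹‖ := by
    rw [habs]
    apply Real.sqrt_le_sqrt
    exact_mod_cast key
  refine ⟨hge, ?_⟩
  intro hmem
  have hlt : ‖hFloor z⁻¹‖ ≤ 1 := by
    simp only [Set.mem_insert_iff, Set.mem_singleton_iff] at hmem
    rcases hmem with h | h | h | h | h <;> rw [h] <;> simp
  have h2 : (1:ℝ) < Real.sqrt 2 := by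
    rw [show (1:ℝ) = Real.sqrt 1 by simp]
    exact Real.sqrt_lt_sqrt (by norm_num) (by norm_num)
  linarith
end

section
/- The image of the fundamental square 𝔉 under complex inversion ι(z) = 1/z is contained in the set {w ∈ ℂ : |w - 1| ≥ 1, |w + 1| ≥ 1, |w - i| ≥ 1, |w + i| ≥ 1}. -/
lemma aux_stmt2 (z w : ℂ) (hz : z ≠ 0)
    (h : Complex.normSq z ≤ Complex.normSq (1 - w * z)) :
    1 ≤ ‖z⁻¹ - w‖ := by
  have hzabs : 0 < ‖z‖ := norm_pos_iff.mpr hz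
  have heq : z⁻¹ - w = (1 - w * z) / z := by field_simp
  rw [heq, norm_div, le_div_iff₀ hzabs, one_mul]
  have := Real.sqrt_le_sqrt h
  simpa [Complex.norm_def] using this

/-- The image of the fundamental square `𝔉 = {z : |Re z| ≤ 1/2, |Im z| ≤ 1/2}`
under the inversion `z ↦ 1/z` stays at distance at least `1` from each of
`1, -1, i, -i`. -/
theorem stmt_2 (z : ℂ) (hz : z ≠ 0) (hre : |z.re| ≤ 1/2) (him : |z.im| ≤ 1/2) :
    1 ≤ ‖z⁻¹ - 1‖ ∧ 1 ≤ ‖z⁻¹ + 1‖ ∧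
      1 ≤ ‖z⁻¹ - Complex.I‖ ∧ 1 ≤ ‖z⁻¹ + Complex.I‖ := by
  have hre' := abs_le.mp hre
  have him' := abs_le.mp him
  refine ⟨aux_stmt2 z 1 hz ?_, ?_, aux_stmt2 z Complex.I hz ?_, ?_⟩
  · simp [Complex.normSq_apply, Complex.sub_re, Complex.sub_im]; nlinarith [hre'.2]
  · have := aux_stmt2 z (-1) hz ?_
    · simpa using this
    · simp [Complex.normSq_apply]; nlinarith [hre'.1]
  · simp [Complex.normSq_apply, Complex.mul_re, Complex.mul_im]; nlinarith [him'.2]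
  · have := aux_stmt2 z (-Complex.I) hz ?_
    · simpa using this
    · simp [Complex.normSq_apply, Complex.mul_re, Complex.mul_im]; nlinarith [him'.1]
end

section
/- If z ∈ 𝔉 has infinite Hurwitz continued fraction z = [0; a₁, a₂, …] with convergents pₙ/qₙ, then for all n ≥ 0: |z - pₙ/qₙ| ≤ (4 + 2√2)/(|aₙ₊₁| · |qₙ|²). -/
/-- The Hurwitz Gauss map `T(z) = 1/z - [1/z]` (with `T 0 = 0`). -/
noncomputable def hT (z : ℂ) : ℂ := if z = 0 then 0 else z⁻¹ - hFloor z⁻¹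

/-- `hDigit z n` is the Hurwitz continued fraction digit `a_{n+1}(z)`. -/
noncomputable def hDigit (z : ℂ) (n : ℕ) : ℂ := hFloor ((hT^[n] (z - hFloor z))⁻¹)

/-- Continuant denominators `qₙ` (for `z ∈ 𝔉`, so `a₀ = 0`, `q₀ = 1`, `q₁ = a₁`). -/
noncomputable def hQ (a : ℕ → ℂ) : ℕ → ℂ
  | 0 => 1
  | 1 => a 0
  | (n + 2) => a (n + 1) * hQ a (n + 1) + hQ a n

/-- Continuant numerators `pₙ` (for `z ∈ 𝔉`: `p₀ = a₀ = 0`, `p₁ = 1`). -/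
noncomputable def hP (a : ℕ → ℂ) : ℕ → ℂ
  | 0 => 0
  | 1 => 1
  | (n + 2) => a (n + 1) * hP a (n + 1) + hP a n

lemma hFloor_re (w : ℂ) : (hFloor w).re = (⌊w.re + 1/2⌋ : ℤ) := by
  simp [hFloor]

lemma hFloor_im (w : ℂ) : (hFloor w).im = (⌊w.im + 1/2⌋ : ℤ) := by
  simp [hFloor]

/-- rationality predicate -/
def IsRatC (w : ℂ) : Prop := ∃ a b : ℚ, w = (a : ℂ) + (b : ℂ) * Complex.I

lemma isRatC_iff (w : ℂ) : IsRatC w ↔ (∃ a : ℚ, w.re = a) ∧ (∃ b : ℚ, w.im = b) := by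
  constructor
  · rintro ⟨a, b, rfl⟩
    exact ⟨⟨a, by simp⟩, ⟨b, by simp⟩⟩
  · rintro ⟨⟨a, ha⟩, ⟨b, hb⟩⟩
    exact ⟨a, b, by apply Complex.ext <;> simp [ha, hb]⟩

lemma isRatC_zero : IsRatC 0 := ⟨0, 0, by simp⟩

lemma isRatC_hFloor (w : ℂ) : IsRatC (hFloor w) := by
  rw [isRatC_iff]
  exact ⟨⟨(⌊w.re + 1/2⌋ : ℤ), by simp [hFloor_re]⟩, ⟨(⌊w.im + 1/2⌋ : ℤ), by simp [hFloor_im]⟩⟩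

lemma IsRatC.add {v w : ℂ} (hv : IsRatC v) (hw : IsRatC w) : IsRatC (v + w) := by
  rw [isRatC_iff] at *
  obtain ⟨⟨a, ha⟩, ⟨b, hb⟩⟩ := hv
  obtain ⟨⟨c, hc⟩, ⟨d, hd⟩⟩ := hw
  exact ⟨⟨a + c, by simp [ha, hc]⟩, ⟨b + d, by simp [hb, hd]⟩⟩

lemma IsRatC.inv {w : ℂ} (hw : IsRatC w) : IsRatC w⁻¹ := by
  rw [isRatC_iff] at *
  obtain ⟨⟨a, ha⟩, ⟨b, hb⟩⟩ := hw
  by_cases h0 : w = 0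
  · subst h0
    exact ⟨⟨0, by simp⟩, ⟨0, by simp⟩⟩
  have hns : Complex.normSq w = ((a^2 + b^2 : ℚ) : ℝ) := by
    simp [Complex.normSq_apply, ha, hb]; push_cast; ring
  refine ⟨⟨a / (a^2 + b^2), ?_⟩, ⟨-b / (a^2 + b^2), ?_⟩⟩
  · rw [Complex.inv_re, hns, ha]; push_cast; ring
  · rw [Complex.inv_im, hns, hb]; push_cast; ring

lemma floor_frac_zero (x : ℝ) : ⌊(x - (⌊x + 1/2⌋ : ℤ)) + 1/2⌋ = 0 := by
  have : (x - (⌊x + 1/2⌋ : ℤ)) + 1/2 = Int.fract (x + 1/2) := by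
    rw [Int.fract]; ring
  rw [this, Int.floor_fract]

/-- the fractional part is in the fundamental domain -/
lemma hFloor_sub_hFloor (w : ℂ) : hFloor (w - hFloor w) = 0 := by
  apply Complex.ext
  · rw [hFloor_re]
    have : (w - hFloor w).re = w.re - (⌊w.re + 1/2⌋ : ℤ) := by
      simp [hFloor_re]
    rw [this, floor_frac_zero]
    simp
  · rw [hFloor_im]
    have : (w - hFloor w).im = w.im - (⌊w.im + 1/2⌋ : ℤ) := by
      simp [hFloor_im]
    rw [this, floor_frac_zero]
    simp

lemma re_bound_of_hFloor_eq_zero {w : ℂ} (h : hFloor w = 0) : |w.re| ≤ 1/2 ∧ |w.im| ≤ 1/2 := by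
  have hre : (⌊w.re + 1/2⌋ : ℤ) = 0 := by
    have := congrArg Complex.re h
    rw [hFloor_re] at this
    exact_mod_cast this
  have him : (⌊w.im + 1/2⌋ : ℤ) = 0 := by
    have := congrArg Complex.im h
    rw [hFloor_im] at this
    exact_mod_cast this
  rw [Int.floor_eq_zero_iff] at hre him
  simp only [Set.mem_Ico] at hre him
  constructor <;> rw [abs_le] <;> constructor <;> linarith [hre.1, hre.2, him.1, him.2]

/-- strict bound for an irrational point of the fundamental domain -/
lemma abs_sq_lt {w : ℂ} (h : hFloor w = 0) (hr : ¬ IsRatC w) :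
    ‖w‖ ^ 2 < 1/2 := by
  obtain ⟨h1, h2⟩ := re_bound_of_hFloor_eq_zero h
  rw [Complex.sq_norm, Complex.normSq_apply]
  have hre2 : w.re ^ 2 ≤ 1/4 := by nlinarith [abs_nonneg w.re, sq_abs w.re]
  have him2 : w.im ^ 2 ≤ 1/4 := by nlinarith [abs_nonneg w.im, sq_abs w.im]
  rcases lt_or_eq_of_le hre2 with h3 | h3
  · nlinarith
  rcases lt_or_eq_of_le him2 with h4 | h4
  · nlinarith
  -- both coordinates are ±1/2, contradicting irrationality
  exfalso
  apply hr
  rw [isRatC_iff]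
  have a1 : |w.re| = 1/2 := by nlinarith [sq_abs w.re, abs_nonneg w.re]
  have a2 : |w.im| = 1/2 := by nlinarith [sq_abs w.im, abs_nonneg w.im]
  have e1 : w.re = 1/2 ∨ w.re = -(1/2) := abs_eq (by norm_num : (0:ℝ) ≤ 1/2) |>.mp a1
  have e2 : w.im = 1/2 ∨ w.im = -(1/2) := abs_eq (by norm_num : (0:ℝ) ≤ 1/2) |>.mp a2
  constructor
  · rcases e1 with h | h
    · exact ⟨1/2, by rw [h]; norm_num⟩
    · exact ⟨-(1/2), by rw [h]; norm_num⟩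
  · rcases e2 with h | h
    · exact ⟨1/2, by rw [h]; norm_num⟩
    · exact ⟨-(1/2), by rw [h]; norm_num⟩

noncomputable def qprev (a : ℕ → ℂ) : ℕ → ℂ
  | 0 => 0
  | (n+1) => hQ a n

noncomputable def pprev (a : ℕ → ℂ) : ℕ → ℂ
  | 0 => 1
  | (n+1) => hP a n

lemma hQ_succ (a : ℕ → ℂ) (n : ℕ) : hQ a (n+1) = a n * hQ a n + qprev a n := by
  cases n <;> simp [hQ, qprev]

lemma hP_succ (a : ℕ → ℂ) (n : ℕ) : hP a (n+1) = a n * hP a n + pprev a n := by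
  cases n <;> simp [hP, pprev]

noncomputable def hZ (z : ℂ) (n : ℕ) : ℂ := hT^[n] z

lemma hZ_zero (z : ℂ) : hZ z 0 = z := rfl

lemma hZ_succ (z : ℂ) (n : ℕ) : hZ z (n+1) = hT (hZ z n) :=
  Function.iterate_succ_apply' hT n z

section Main

variable {z : ℂ} (hz : hFloor z = 0)
  (hirr : ∀ a b : ℚ, z ≠ (a : ℂ) + (b : ℂ) * Complex.I)

include hz hirr

lemma notRat : ∀ n, ¬ IsRatC (hZ z n) := by
  intro n
  induction n with
  | zero => rintro ⟨a, b, h⟩; exact hirr a b h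
  | succ n ih =>
    intro hrat
    have hne : hZ z n ≠ 0 := fun h => ih (h ▸ isRatC_zero)
    have hstep : hZ z (n+1) = (hZ z n)⁻¹ - hFloor (hZ z n)⁻¹ := by
      rw [hZ_succ, hT, if_neg hne]
    have hinv : (hZ z n)⁻¹ = hZ z (n+1) + hFloor (hZ z n)⁻¹ := by
      rw [hstep]; ring
    have : IsRatC (hZ z n) := by
      rw [← inv_inv (hZ z n)]
      exact (hinv ▸ hrat.add (isRatC_hFloor _)).inv
    exact ih this

lemma hZ_ne (n : ℕ) : hZ z n ≠ 0 :=
  fun h => notRat hz hirr n (h ▸ isRatC_zero)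

lemma hZ_floor : ∀ n, hFloor (hZ z n) = 0 := by
  intro n
  cases n with
  | zero => exact hz
  | succ n =>
    have hne : hZ z n ≠ 0 := hZ_ne hz hirr n
    have hstep : hZ z (n+1) = (hZ z n)⁻¹ - hFloor (hZ z n)⁻¹ := by
      rw [hZ_succ, hT, if_neg hne]
    rw [hstep]
    exact hFloor_sub_hFloor _

lemma hZ_sq (n : ℕ) : ‖hZ z n‖ ^ 2 < 1/2 :=
  abs_sq_lt (hZ_floor hz hirr n) (notRat hz hirr n)

lemma hZZ (n : ℕ) : ‖hZ z n‖ * ‖hZ z (n+1)‖ < 1/2 := by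
  have h1 := hZ_sq hz hirr n
  have h2 := hZ_sq hz hirr (n+1)
  have n1 := norm_nonneg (hZ z n)
  have n2 := norm_nonneg (hZ z (n+1))
  nlinarith

lemma digit_eq (n : ℕ) : hDigit z n = hFloor ((hZ z n)⁻¹) := by
  simp [hDigit, hz, hZ]

lemma inv_hZ (n : ℕ) : (hZ z n)⁻¹ = hDigit z n + hZ z (n+1) := by
  have hne : hZ z n ≠ 0 := hZ_ne hz hirr n
  rw [hZ_succ, hT, if_neg hne, digit_eq hz hirr]
  ring

lemma hZ_inv_mul (n : ℕ) : hZ z n * (hDigit z n + hZ z (n+1)) = 1 := by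
  rw [← inv_hZ hz hirr]
  exact mul_inv_cancel₀ (hZ_ne hz hirr n)

lemma digit_mul (n : ℕ) :
    hDigit z n * hZ z n = 1 - hZ z n * hZ z (n+1) := by
  have := hZ_inv_mul hz hirr n
  linear_combination this

lemma abs_digit_mul (n : ℕ) :
    ‖hDigit z n‖ * ‖hZ z n‖ ≤ 3/2 := by
  rw [← norm_mul, digit_mul hz hirr]
  have h1 : ‖1 - hZ z n * hZ z (n+1)‖ ≤
      ‖(1 : ℂ)‖ + ‖hZ z n * hZ z (n+1)‖ := by
    have := norm_add_le (1 : ℂ) (-(hZ z n * hZ z (n+1)))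
    simpa [sub_eq_add_neg] using this
  have h2 := hZZ hz hirr n
  rw [norm_mul] at h1
  simp only [norm_one] at h1
  linarith

lemma digit_ne (n : ℕ) : hDigit z n ≠ 0 := by
  intro h
  have := digit_mul hz hirr n
  rw [h, zero_mul] at this
  have h1 : hZ z n * hZ z (n+1) = 1 := by linear_combination this
  have h2 := hZZ hz hirr n
  rw [← norm_mul] at h2
  rw [h1] at h2
  simp at h2
  linarith

end Main

noncomputable def hC (z : ℂ) (n : ℕ) : ℂ :=
  hQ (hDigit z) n + qprev (hDigit z) n * hZ z n

lemma hC_zero (z : ℂ) : hC z 0 = 1 := by simp [hC, hQ, qprev]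

section Main2

variable {z : ℂ} (hz : hFloor z = 0)
  (hirr : ∀ a b : ℚ, z ≠ (a : ℂ) + (b : ℂ) * Complex.I)

include hz hirr

lemma c_rec (n : ℕ) : hC z n = hZ z n * hC z (n+1) := by
  have h1 := hZ_inv_mul hz hirr n
  show hQ (hDigit z) n + qprev (hDigit z) n * hZ z n =
    hZ z n * (hQ (hDigit z) (n+1) + qprev (hDigit z) (n+1) * hZ z (n+1))
  rw [hQ_succ]
  show _ = hZ z n * ((hDigit z n * hQ (hDigit z) n + qprev (hDigit z) n) +
    hQ (hDigit z) n * hZ z (n+1))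
  linear_combination (-(hQ (hDigit z) n)) * h1

lemma cne : ∀ n, hC z n ≠ 0 := by
  intro n
  induction n with
  | zero => rw [hC_zero]; exact one_ne_zero
  | succ n ih =>
    intro h
    apply ih
    rw [c_rec hz hirr n, h, mul_zero]

lemma abs_c (n : ℕ) :
    ‖hC z n‖ = ‖hZ z n‖ * ‖hC z (n+1)‖ := by
  rw [c_rec hz hirr n, norm_mul]

lemma qbound : ∀ n, ‖hQ (hDigit z) n‖ ≤ 2 * ‖hC z n‖ := by
  intro n
  induction n with
  | zero =>
    simp [hQ, hC_zero]
  | succ n ih =>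
    have hsplit : hQ (hDigit z) (n+1) = hC z (n+1) - hQ (hDigit z) n * hZ z (n+1) := by
      show hQ (hDigit z) (n+1) =
        (hQ (hDigit z) (n+1) + qprev (hDigit z) (n+1) * hZ z (n+1)) -
          hQ (hDigit z) n * hZ z (n+1)
      show hQ (hDigit z) (n+1) =
        (hQ (hDigit z) (n+1) + hQ (hDigit z) n * hZ z (n+1)) -
          hQ (hDigit z) n * hZ z (n+1)
      ring
    have htri : ‖hQ (hDigit z) (n+1)‖ ≤
        ‖hC z (n+1)‖ + ‖hQ (hDigit z) n‖ * ‖hZ z (n+1)‖ := by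
      rw [hsplit, sub_eq_add_neg]
      have := norm_add_le (hC z (n+1)) (-(hQ (hDigit z) n * hZ z (n+1)))
      simpa [norm_mul] using this
    have hZZn := hZZ hz hirr n
    have habsc := abs_c hz hirr n
    have hZn1 := norm_nonneg (hZ z (n+1))
    have hZn := norm_nonneg (hZ z n)
    have hcn1 := norm_nonneg (hC z (n+1))
    have hqn := norm_nonneg (hQ (hDigit z) n)
    nlinarith

lemma qne : ∀ n, hQ (hDigit z) n ≠ 0 := by
  intro n
  cases n with
  | zero => show (1 : ℂ) ≠ 0; exact one_ne_zero
  | succ n =>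
    intro h
    have hsplit : hC z (n+1) = hQ (hDigit z) (n+1) + hQ (hDigit z) n * hZ z (n+1) := rfl
    have htri : ‖hC z (n+1)‖ ≤
        ‖hQ (hDigit z) (n+1)‖ +
          ‖hQ (hDigit z) n‖ * ‖hZ z (n+1)‖ := by
      rw [hsplit]
      have := norm_add_le (hQ (hDigit z) (n+1)) (hQ (hDigit z) n * hZ z (n+1))
      simpa [norm_mul] using this
    rw [h] at htri
    simp only [norm_zero, zero_add] at htri
    have hZZn := hZZ hz hirr n
    have habsc := abs_c hz hirr n
    have hqb := qbound hz hirr n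
    have hcn1 : 0 < ‖hC z (n+1)‖ :=
      norm_pos_iff.mpr (cne hz hirr (n+1))
    have hZn1 := norm_nonneg (hZ z (n+1))
    have hZn := norm_nonneg (hZ z n)
    have hqn := norm_nonneg (hQ (hDigit z) n)
    nlinarith

lemma main_identity : ∀ n,
    z * hC z n = hP (hDigit z) n + pprev (hDigit z) n * hZ z n := by
  intro n
  induction n with
  | zero =>
    rw [hC_zero]
    show z * 1 = 0 + 1 * hZ z 0
    rw [hZ_zero]; ring
  | succ n ih =>
    apply mul_left_cancel₀ (hZ_ne hz hirr n)
    have h1 := hZ_inv_mul hz hirr n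
    have hcr := c_rec hz hirr n
    rw [hP_succ]
    show hZ z n * (z * hC z (n+1)) =
      hZ z n * ((hDigit z n * hP (hDigit z) n + pprev (hDigit z) n) +
        hP (hDigit z) n * hZ z (n+1))
    linear_combination ih - z * hcr - (hP (hDigit z) n) * h1

lemma det_identity : ∀ n,
    pprev (hDigit z) n * hQ (hDigit z) n - hP (hDigit z) n * qprev (hDigit z) n
      = (-1 : ℂ) ^ n := by
  intro n
  induction n with
  | zero => simp [pprev, qprev, hP, hQ]
  | succ n ih =>
    rw [hP_succ, hQ_succ]
    show hP (hDigit z) n * (hDigit z n * hQ (hDigit z) n + qprev (hDigit z) n) -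
      (hDigit z n * hP (hDigit z) n + pprev (hDigit z) n) * hQ (hDigit z) n
        = (-1 : ℂ) ^ (n+1)
    rw [pow_succ]
    linear_combination (-1 : ℂ) * ih

lemma err_identity (n : ℕ) :
    (z - hP (hDigit z) n / hQ (hDigit z) n) * (hC z n * hQ (hDigit z) n)
      = (-1 : ℂ) ^ n * hZ z n := by
  have hq := qne hz hirr n
  have hmain := main_identity hz hirr n
  have hdet := det_identity hz hirr n
  have e1 : (z - hP (hDigit z) n / hQ (hDigit z) n) * (hC z n * hQ (hDigit z) n)
      = z * hC z n * hQ (hDigit z) n - hP (hDigit z) n * hC z n := by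
    field_simp
  rw [e1, hmain]
  show (hP (hDigit z) n + pprev (hDigit z) n * hZ z n) * hQ (hDigit z) n -
    hP (hDigit z) n * (hQ (hDigit z) n + qprev (hDigit z) n * hZ z n) = _
  linear_combination (hZ z n) * hdet

lemma abs_err (n : ℕ) :
    ‖z - hP (hDigit z) n / hQ (hDigit z) n‖
      = ‖hZ z n‖ / (‖hC z n‖ * ‖hQ (hDigit z) n‖) := by
  have h := congrArg norm (err_identity hz hirr n)
  rw [norm_mul, norm_mul, norm_mul, norm_pow] at h
  simp only [norm_neg, norm_one, one_pow, one_mul] at h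
  have hcq : 0 < ‖hC z n‖ * ‖hQ (hDigit z) n‖ :=
    mul_pos (norm_pos_iff.mpr (cne hz hirr n))
      (norm_pos_iff.mpr (qne hz hirr n))
  rw [eq_div_iff (ne_of_gt hcq)]
  exact h

end Main2


/-- If `z ∈ 𝔉` is irrational, then for all `n ≥ 0`,
`|z - pₙ/qₙ| ≤ (4 + 2√2)/(|a_{n+1}| |qₙ|²)`. -/
theorem stmt_5 (z : ℂ) (hz : hFloor z = 0)
    (hirr : ∀ a b : ℚ, z ≠ (a : ℂ) + (b : ℂ) * Complex.I) :
    ∀ n : ℕ,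
      ‖z - hP (hDigit z) n / hQ (hDigit z) n‖ ≤
        (4 + 2 * Real.sqrt 2) /
          (‖hDigit z n‖ * ‖hQ (hDigit z) n‖ ^ 2) := by
  intro n
  rw [abs_err hz hirr n]
  have hc : 0 < ‖hC z n‖ :=
    norm_pos_iff.mpr (cne hz hirr n)
  have hq : 0 < ‖hQ (hDigit z) n‖ :=
    norm_pos_iff.mpr (qne hz hirr n)
  have ha : 0 < ‖hDigit z n‖ :=
    norm_pos_iff.mpr (digit_ne hz hirr n)
  have hZn := norm_nonneg (hZ z n)
  have hqb := qbound hz hirr n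
  have hdm := abs_digit_mul hz hirr n
  have hs2 := Real.sqrt_nonneg 2
  rw [div_le_div_iff₀ (by positivity) (by positivity)]
  nlinarith [mul_pos hc hq, mul_nonneg hZn (le_of_lt hq), mul_le_mul_of_nonneg_right hqb (le_of_lt hq)]
end

section
/- Let z ∈ 𝔉 with |z| ≤ 1/√2 and let (qₙ) be the Hurwitz continuants with |qₙ₋₁| < |qₙ|. If aₙ₊₁ ∈ ℤ[i] with |aₙ₊₁| ≥ 2 and zₙ₊₂ ∈ 𝔉 (so |zₙ₊₂| ≤ 1/√2), then |aₙ₊₁ + zₙ₊₂ + qₙ₋₁/qₙ| ≥ ((2-√2)/4)·|aₙ₊₁|. -/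
/-- If `qₙ₋₁, qₙ` are complex with `qₙ ≠ 0`, `|qₙ₋₁| < |qₙ|`, a digit `a` has
`|a| ≥ 2`, and `w ∈ 𝔉` (so `|w| ≤ 1/√2`), then
`|a + w + qₙ₋₁/qₙ| ≥ ((2 - √2)/4) |a|`. -/
theorem stmt_6 (a w qprev q : ℂ) (hq : q ≠ 0)
    (hlt : ‖qprev‖ < ‖q‖)
    (ha : 2 ≤ ‖a‖) (hw : ‖w‖ ≤ 1 / Real.sqrt 2) :
    (2 - Real.sqrt 2) / 4 * ‖a‖ ≤ ‖a + w + qprev / q‖ := by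
  have hq' : ‖qprev / q‖ < 1 := by
    rw [norm_div, div_lt_one (lt_of_le_of_lt (norm_nonneg qprev) hlt)]
    exact hlt
  have h1 : ‖a‖ - ‖w‖ - ‖qprev / q‖
      ≤ ‖a + w + qprev / q‖ := by
    have h2 : ‖a + w‖ ≤ ‖a + w + qprev / q‖ + ‖qprev / q‖ := by
      calc ‖a + w‖ = ‖a + w + qprev / q - qprev / q‖ := by ring_nf
      _ ≤ _ := norm_sub_le _ _
    have h3 : ‖a‖ ≤ ‖a + w‖ + ‖w‖ := by
      calc ‖a‖ = ‖a + w - w‖ := by ring_nf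
      _ ≤ _ := norm_sub_le _ _
    linarith
  have hs : Real.sqrt 2 ^ 2 = 2 := Real.sq_sqrt (by norm_num)
  have hs1 : (1:ℝ) ≤ Real.sqrt 2 := by nlinarith [Real.sqrt_nonneg 2]
  have hs2 : Real.sqrt 2 ≤ 2 := by nlinarith [Real.sqrt_nonneg 2]
  have hw' : ‖w‖ ≤ Real.sqrt 2 / 2 := by
    rw [one_div] at hw
    calc ‖w‖ ≤ (Real.sqrt 2)⁻¹ := hw
    _ = Real.sqrt 2 / 2 := by rw [inv_eq_one_div, div_eq_div_iff (by positivity) (by norm_num)]; nlinarith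
  nlinarith [norm_nonneg (qprev/q)]
end
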